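/- Let each f_i be differentiable, convex and L-smooth, G convex, and let the matrices satisfy Assumption (A8), with 0 < γ ≤ λ_min(D)/L. Let {(X^k, X̲^k, Y̲^k)} be generated by: X̲^{k+1} = D·X^k − γ(∇f(X^k) + Y̲^k); X^{k+1} = prox_{γg}(X̲^{k+1}); Y̲^{k+1} = Y̲^k + (1/γ)·C·X^{k+1}, with Y̲^0 = 0. Then for every t ≥ 1, every X = 1·xᵀ with x ∈ ℝ^d, and every Y ∈ ℝ^{m×d} with 1ᵀY = 0: φ(X̂^t, Y) − φ(X, Y) ≤ (1/(2t))·( (1/γ)·‖X^0 − X‖²_D + (γ/λ₂(C))·‖Y‖² ), where X̂^t = (1/t)·∑_{k=1}^t X^k and φ(X,Y) = f(X) + g(X) + ⟨X, Y⟩. -/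

import Mathlib

noncomputable section

open Matrix Finset

/-- `ℝ^d` as a Euclidean (inner-product) space. -/
abbrev Vec (d : ℕ) := EuclideanSpace ℝ (Fin d)

/-- Interpret a plain tuple as a Euclidean vector. -/
def toVec {d : ℕ} (x : Fin d → ℝ) : Vec d := (WithLp.equiv 2 (Fin d → ℝ)).symm x

/-- Interpret a Euclidean vector as a plain tuple. -/
def ofVec {d : ℕ} (x : Vec d) : Fin d → ℝ := (WithLp.equiv 2 (Fin d → ℝ)) x

/-- The matrix `1 · xᵀ` whose rows all equal `x`. -/
def oneOuter (m : ℕ) {d : ℕ} (x : Vec d) : Matrix (Fin m) (Fin d) ℝ :=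
  Matrix.of fun _ j => ofVec x j

/-- `f(X) = ∑ i, f_i(x_i)`, where `x_i` is the `i`-th row of `X`. -/
def fMat {m d : ℕ} (f : Fin m → Vec d → ℝ) (X : Matrix (Fin m) (Fin d) ℝ) : ℝ :=
  ∑ i, f i (toVec (X i))

/-- `g(X) = ∑ i, G(x_i)`. -/
def gMat {m d : ℕ} (G : Vec d → ℝ) (X : Matrix (Fin m) (Fin d) ℝ) : ℝ :=
  ∑ i, G (toVec (X i))

/-- `∇f(X)`: the matrix whose `i`-th row is `∇f_i(x_i)`. -/
def gradMat {m d : ℕ} (gf : Fin m → Vec d → Vec d) (X : Matrix (Fin m) (Fin d) ℝ) :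
    Matrix (Fin m) (Fin d) ℝ :=
  Matrix.of fun i => ofVec (gf i (toVec (X i)))

/-- `F(x) = (1/m) ∑ i, f_i(x)`. -/
def Fbar {m d : ℕ} (f : Fin m → Vec d → ℝ) (x : Vec d) : ℝ :=
  (1 / (m : ℝ)) * ∑ i, f i x

/-- `gf` is the gradient field of `f`. -/
def IsGradient {d : ℕ} (f : Vec d → ℝ) (gf : Vec d → Vec d) : Prop :=
  ∀ x, HasGradientAt f (gf x) x

/-- `L`-smoothness: the gradient field is `L`-Lipschitz. -/
def LSmooth {d : ℕ} (L : ℝ) (gf : Vec d → Vec d) : Prop :=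
  ∀ x y, ‖gf x - gf y‖ ≤ L * ‖x - y‖

/-- `ξ` is a subgradient of `G` at `x`. -/
def IsSubgradientAt {d : ℕ} (G : Vec d → ℝ) (ξ x : Vec d) : Prop :=
  ∀ y, G x + (inner ℝ ξ (y - x) : ℝ) ≤ G y

/-- `p` is the proximal point `prox_{γ G}(z)`, i.e. a minimizer of
`y ↦ G(y) + ‖y − z‖²/(2γ)`. -/
def IsProx {d : ℕ} (G : Vec d → ℝ) (γ : ℝ) (z p : Vec d) : Prop :=
  ∀ y, G p + ‖p - z‖ ^ 2 / (2 * γ) ≤ G y + ‖y - z‖ ^ 2 / (2 * γ)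

/-- Apply a map `P : ℝ^d → ℝ^d` rowwise to a matrix (used for `prox_{γ g}`). -/
def rowsMap {m d : ℕ} (P : Vec d → Vec d) (Z : Matrix (Fin m) (Fin d) ℝ) :
    Matrix (Fin m) (Fin d) ℝ :=
  Matrix.of fun i => ofVec (P (toVec (Z i)))

/-- Frobenius inner ℝ product `⟨X, Y⟩ = trace(Xᵀ Y)`. -/
def frInner {n p : Type*} [Fintype n] [Fintype p] (X Y : Matrix n p ℝ) : ℝ :=
  Matrix.trace (Xᵀ * Y)

/-- Squared Frobenius norm. -/
def froSq {n p : Type*} [Fintype n] [Fintype p] (X : Matrix n p ℝ) : ℝ := frInner X X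

/-- Frobenius norm. -/
def fro {n p : Type*} [Fintype n] [Fintype p] (X : Matrix n p ℝ) : ℝ := Real.sqrt (froSq X)

/-- Weighted squared norm `‖X‖²_M = trace(Xᵀ M X)`. -/
def mnormSq {n p : Type*} [Fintype n] [Fintype p] (M : Matrix n n ℝ) (X : Matrix n p ℝ) : ℝ :=
  frInner X (M * X)

/-- Weighted inner ℝ product `⟨X, Y⟩_M = trace(Xᵀ M Y)`. -/
def minnerM {n p : Type*} [Fintype n] [Fintype p] (M : Matrix n n ℝ) (X Y : Matrix n p ℝ) : ℝ :=
  frInner X (M * Y)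

/-- The set of eigenvalues of a matrix. -/
def eigs {m : ℕ} (M : Matrix (Fin m) (Fin m) ℝ) : Set ℝ :=
  {r | ∃ v : Fin m → ℝ, v ≠ 0 ∧ M *ᵥ v = r • v}

/-- Largest eigenvalue. -/
def lmax {m : ℕ} (M : Matrix (Fin m) (Fin m) ℝ) : ℝ := sSup (eigs M)

/-- Smallest eigenvalue. -/
def lmin {m : ℕ} (M : Matrix (Fin m) (Fin m) ℝ) : ℝ := sInf (eigs M)

/-- Second smallest eigenvalue of a symmetric matrix whose null space is `span{1}`:
the smallest eigenvalue attained on the orthogonal complement of `1`. -/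
def lam2 {m : ℕ} (M : Matrix (Fin m) (Fin m) ℝ) : ℝ :=
  sInf {r | ∃ v : Fin m → ℝ, v ≠ 0 ∧ (∑ i, v i) = 0 ∧ M *ᵥ v = r • v}

/-- Spectral radius. -/
def specRad {m : ℕ} (M : Matrix (Fin m) (Fin m) ℝ) : ℝ := sSup ((fun r => |r|) '' eigs M)

/-- The null space of `C` is exactly `span{1}`. -/
def NullSpanOnes {m : ℕ} (C : Matrix (Fin m) (Fin m) ℝ) : Prop :=
  ∀ v : Fin m → ℝ, C *ᵥ v = 0 ↔ ∃ c : ℝ, v = fun _ => c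

/-- The averaging matrix `J = 1·1ᵀ/m`. -/
def Jmat (m : ℕ) : Matrix (Fin m) (Fin m) ℝ := Matrix.of fun _ _ => 1 / (m : ℝ)

/-- `φ(X,Y) = f(X) + g(X) + ⟨X, Y⟩`. -/
def phiFG {m d : ℕ} (f : Fin m → Vec d → ℝ) (G : Vec d → ℝ)
    (X Y : Matrix (Fin m) (Fin d) ℝ) : ℝ :=
  fMat f X + gMat G X + frInner X Y

/-! ### Auxiliary lemmas -/

section FRLemmas
variable {n p : Type*} [Fintype n] [Fintype p]

lemma frInner_eq_sum (X Y : Matrix n p ℝ) : frInner X Y = ∑ i, ∑ j, X i j * Y i j := by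
  rw [frInner, Matrix.trace]
  simp only [Matrix.diag_apply, Matrix.mul_apply, Matrix.transpose_apply]
  exact Finset.sum_comm

lemma frInner_comm (X Y : Matrix n p ℝ) : frInner X Y = frInner Y X := by
  simp only [frInner_eq_sum]; congr 1; ext i; congr 1; ext j; ring

lemma frInner_add_left (X Y Z : Matrix n p ℝ) :
    frInner (X + Y) Z = frInner X Z + frInner Y Z := by
  simp [frInner_eq_sum, Matrix.add_apply, add_mul, Finset.sum_add_distrib]

lemma frInner_sub_left (X Y Z : Matrix n p ℝ) :
    frInner (X - Y) Z = frInner X Z - frInner Y Z := by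
  simp [frInner_eq_sum, Matrix.sub_apply, sub_mul, Finset.sum_sub_distrib]

lemma frInner_sub_right (X Y Z : Matrix n p ℝ) :
    frInner X (Y - Z) = frInner X Y - frInner X Z := by
  simp [frInner_eq_sum, Matrix.sub_apply, mul_sub, Finset.sum_sub_distrib]

lemma frInner_smul_left (c : ℝ) (X Y : Matrix n p ℝ) :
    frInner (c • X) Y = c * frInner X Y := by
  simp [frInner_eq_sum, Matrix.smul_apply, Finset.mul_sum, mul_assoc]

lemma frInner_smul_right (c : ℝ) (X Y : Matrix n p ℝ) :
    frInner X (c • Y) = c * frInner X Y := by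
  simp only [frInner_eq_sum, Matrix.smul_apply, smul_eq_mul, Finset.mul_sum]
  congr 1; ext i; congr 1; ext j; ring

lemma frInner_zero_left (Y : Matrix n p ℝ) : frInner 0 Y = 0 := by
  simp [frInner_eq_sum]

lemma frInner_zero_right (Y : Matrix n p ℝ) : frInner Y 0 = 0 := by
  simp [frInner_eq_sum]

lemma frInner_sum_left {ι : Type*} (s : Finset ι) (X : ι → Matrix n p ℝ) (Y : Matrix n p ℝ) :
    frInner (∑ k ∈ s, X k) Y = ∑ k ∈ s, frInner (X k) Y := by
  classical
  induction s using Finset.induction_on with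
  | empty => simp [frInner_zero_left]
  | insert _ _ h ih => rw [Finset.sum_insert h, frInner_add_left, ih, Finset.sum_insert h]

lemma frInner_mul_eq_col (M : Matrix n n ℝ) (X Y : Matrix n p ℝ) :
    frInner X (M * Y) = ∑ j, (fun i => X i j) ⬝ᵥ (M *ᵥ (fun i => Y i j)) := by
  simp only [frInner_eq_sum, Matrix.mul_apply, dotProduct, Matrix.mulVec]
  rw [Finset.sum_comm]

lemma frInner_eq_col (X Y : Matrix n p ℝ) :
    frInner X Y = ∑ j, (fun i => X i j) ⬝ᵥ (fun i => Y i j) := by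
  simp only [frInner_eq_sum, dotProduct]
  rw [Finset.sum_comm]

lemma frInner_symm_mul {M : Matrix n n ℝ} (hM : Mᵀ = M) (X Y : Matrix n p ℝ) :
    frInner X (M * Y) = frInner Y (M * X) := by
  rw [frInner, frInner, ← Matrix.trace_transpose (Xᵀ * (M * Y))]
  rw [Matrix.transpose_mul, Matrix.transpose_mul, Matrix.transpose_transpose, hM,
    Matrix.mul_assoc]

lemma mnormSq_nonneg {M : Matrix n n ℝ} (hM : M.PosSemidef) (X : Matrix n p ℝ) :
    0 ≤ mnormSq M X := by
  rw [mnormSq, frInner_mul_eq_col]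
  apply Finset.sum_nonneg
  intro j _
  have := hM.dotProduct_mulVec_nonneg (fun i => X i j)
  simpa using this

lemma froSq_eq_col (X : Matrix n p ℝ) :
    froSq X = ∑ j, (fun i => X i j) ⬝ᵥ (fun i => X i j) := by
  simp only [froSq, frInner_eq_sum, dotProduct]
  rw [Finset.sum_comm]

lemma froSq_nonneg (X : Matrix n p ℝ) : 0 ≤ froSq X := by
  rw [froSq_eq_col]
  apply Finset.sum_nonneg
  intro j _
  exact Finset.sum_nonneg fun i _ => mul_self_nonneg _

lemma froSq_neg (X : Matrix n p ℝ) : froSq (-X) = froSq X := by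
  simp [froSq, frInner_eq_sum]

lemma mnormSq_add {M : Matrix n n ℝ} (hM : Mᵀ = M) (A B : Matrix n p ℝ) :
    mnormSq M (A + B) = mnormSq M A + mnormSq M B + 2 * frInner A (M * B) := by
  have h1 : M * (A + B) = M * A + M * B := Matrix.mul_add M A B
  rw [mnormSq, h1, frInner_add_left]
  have h2 : frInner A (M * A + M * B) = frInner A (M * A) + frInner A (M * B) := by
    have := frInner_sub_right A (M * A + M * B) (M * B)
    simp only [add_sub_cancel_right] at this
    linarith
  have h3 : frInner B (M * A + M * B) = frInner B (M * A) + frInner B (M * B) := by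
    have := frInner_sub_right B (M * A + M * B) (M * A)
    simp only [add_sub_cancel_left] at this
    linarith
  have h4 : frInner B (M * A) = frInner A (M * B) := frInner_symm_mul hM B A
  rw [h2, h3, h4, mnormSq, mnormSq]
  ring

end FRLemmas

section Spectral
variable {m : ℕ} {M : Matrix (Fin m) (Fin m) ℝ}

/-- the i-th eigenvector as a plain function -/
def evec (hM : M.IsHermitian) (i : Fin m) : Fin m → ℝ := ⇑(hM.eigenvectorBasis i)

lemma dot_eq_inner (x y : EuclideanSpace ℝ (Fin m)) : (inner ℝ x y : ℝ) = ⇑x ⬝ᵥ ⇑y := by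
  simp [PiLp.inner_apply, RCLike.inner_apply, dotProduct]
  exact Finset.sum_congr rfl fun _ _ => mul_comm _ _

lemma evec_dot (hM : M.IsHermitian) (i j : Fin m) :
    evec hM i ⬝ᵥ evec hM j = if i = j then 1 else 0 := by
  have h := hM.eigenvectorBasis.orthonormal
  rw [orthonormal_iff_ite] at h
  rw [evec, evec, ← dot_eq_inner]
  exact h i j

lemma evec_mulVec (hM : M.IsHermitian) (i : Fin m) :
    M *ᵥ evec hM i = hM.eigenvalues i • evec hM i :=
  hM.mulVec_eigenvectorBasis i

lemma evec_expand (hM : M.IsHermitian) (v : Fin m → ℝ) :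
    v = ∑ i, (evec hM i ⬝ᵥ v) • evec hM i := by
  have h := (hM.eigenvectorBasis.sum_repr' ((WithLp.equiv 2 (Fin m → ℝ)).symm v)).symm
  have h2 : ∀ i : Fin m, (inner ℝ (hM.eigenvectorBasis i)
      ((WithLp.equiv 2 (Fin m → ℝ)).symm v) : ℝ) = evec hM i ⬝ᵥ v := by
    intro i; rw [dot_eq_inner]; rfl
  simp_rw [h2] at h
  replace h := congrArg WithLp.ofLp h
  simpa [evec] using h


lemma dot_sum_right {ι : Type*} (s : Finset ι) (u : Fin m → ℝ) (w : ι → Fin m → ℝ) :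
    u ⬝ᵥ (∑ i ∈ s, w i) = ∑ i ∈ s, u ⬝ᵥ w i := by
  classical
  induction s using Finset.induction_on with
  | empty => simp
  | insert _ _ h ih => rw [Finset.sum_insert h, dotProduct_add, ih, Finset.sum_insert h]

lemma dot_sum_left {ι : Type*} (s : Finset ι) (u : Fin m → ℝ) (w : ι → Fin m → ℝ) :
    (∑ i ∈ s, w i) ⬝ᵥ u = ∑ i ∈ s, w i ⬝ᵥ u := by
  classical
  induction s using Finset.induction_on with
  | empty => simp
  | insert _ _ h ih => rw [Finset.sum_insert h, add_dotProduct, ih, Finset.sum_insert h]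

lemma mulVec_sum' {ι : Type*} (s : Finset ι) (A : Matrix (Fin m) (Fin m) ℝ) (w : ι → Fin m → ℝ) :
    A *ᵥ (∑ i ∈ s, w i) = ∑ i ∈ s, A *ᵥ w i := by
  classical
  induction s using Finset.induction_on with
  | empty => simp
  | insert _ _ h ih => rw [Finset.sum_insert h, Matrix.mulVec_add, ih, Finset.sum_insert h]

lemma dot_sum_smul_evec (hM : M.IsHermitian) (c : Fin m → ℝ) (j : Fin m) :
    evec hM j ⬝ᵥ (∑ i, c i • evec hM i) = c j := by
  rw [dot_sum_right]
  simp_rw [dotProduct_smul, evec_dot, smul_eq_mul, mul_ite, mul_one, mul_zero]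
  simp

lemma mulVec_expand (hM : M.IsHermitian) (v : Fin m → ℝ) :
    M *ᵥ v = ∑ i, (hM.eigenvalues i * (evec hM i ⬝ᵥ v)) • evec hM i := by
  conv_lhs => rw [evec_expand hM v]
  rw [mulVec_sum']
  simp_rw [Matrix.mulVec_smul, evec_mulVec, smul_smul]
  congr 1; ext i; rw [mul_comm]

lemma quad_eq (hM : M.IsHermitian) (v : Fin m → ℝ) :
    v ⬝ᵥ (M *ᵥ v) = ∑ i, hM.eigenvalues i * (evec hM i ⬝ᵥ v) ^ 2 := by
  rw [mulVec_expand hM v, dot_sum_right]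
  congr 1; ext i
  rw [dotProduct_smul, smul_eq_mul, dotProduct_comm]
  ring

lemma normsq_eq (hM : M.IsHermitian) (v : Fin m → ℝ) :
    v ⬝ᵥ v = ∑ i, (evec hM i ⬝ᵥ v) ^ 2 := by
  nth_rewrite 2 [evec_expand hM v]
  rw [dot_sum_right]
  congr 1; ext i
  rw [dotProduct_smul, smul_eq_mul, dotProduct_comm]
  ring

lemma evec_ne_zero (hM : M.IsHermitian) (i : Fin m) : evec hM i ≠ 0 := by
  intro h
  have := evec_dot hM i i
  rw [h] at this
  simp at this

lemma dotProduct_self_nonneg (v : Fin m → ℝ) : 0 ≤ v ⬝ᵥ v :=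
  Finset.sum_nonneg fun i _ => mul_self_nonneg _

lemma dotProduct_self_pos {v : Fin m → ℝ} (hv : v ≠ 0) : 0 < v ⬝ᵥ v := by
  rcases lt_or_eq_of_le (dotProduct_self_nonneg v) with h | h
  · exact h
  · exact absurd (dotProduct_self_eq_zero.mp h.symm) hv

end Spectral

section Lmin
variable {m : ℕ} {M : Matrix (Fin m) (Fin m) ℝ}

lemma eigs_lower_bound (hM : M.IsHermitian) {μ : ℝ} (hμ : ∀ i, μ ≤ hM.eigenvalues i) :
    ∀ r ∈ eigs M, μ ≤ r := by
  rintro r ⟨v, hv, hEig⟩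
  have hq := quad_eq hM v
  rw [hEig, dotProduct_smul, smul_eq_mul] at hq
  have hlow : μ * (v ⬝ᵥ v) ≤ ∑ i, hM.eigenvalues i * (evec hM i ⬝ᵥ v) ^ 2 := by
    rw [normsq_eq hM v, Finset.mul_sum]
    exact Finset.sum_le_sum fun i _ => mul_le_mul_of_nonneg_right (hμ i) (sq_nonneg _)
  have hpos : 0 < v ⬝ᵥ v := dotProduct_self_pos hv
  nlinarith [hq, hlow, hpos]

lemma lmin_quad (hm : 0 < m) (hM : M.IsHermitian) (v : Fin m → ℝ) :
    lmin M * (v ⬝ᵥ v) ≤ v ⬝ᵥ (M *ᵥ v) := by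
  have hne : (Finset.univ : Finset (Fin m)).Nonempty := ⟨⟨0, hm⟩, Finset.mem_univ _⟩
  set μ := Finset.univ.inf' hne hM.eigenvalues with hμdef
  have hμle : ∀ i, μ ≤ hM.eigenvalues i := fun i => Finset.inf'_le _ (Finset.mem_univ i)
  obtain ⟨i₀, -, hi₀⟩ := Finset.exists_mem_eq_inf' hne hM.eigenvalues
  have hμ_mem : μ ∈ eigs M := ⟨evec hM i₀, evec_ne_zero hM i₀, by
    rw [evec_mulVec, hμdef, hi₀]⟩
  have hlb := eigs_lower_bound hM hμle
  have hlmin_le : lmin M ≤ μ := csInf_le ⟨μ, hlb⟩ hμ_mem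
  have h1 : μ * (v ⬝ᵥ v) ≤ v ⬝ᵥ (M *ᵥ v) := by
    rw [quad_eq hM v, normsq_eq hM v, Finset.mul_sum]
    exact Finset.sum_le_sum fun i _ => mul_le_mul_of_nonneg_right (hμle i) (sq_nonneg _)
  have h2 : lmin M * (v ⬝ᵥ v) ≤ μ * (v ⬝ᵥ v) :=
    mul_le_mul_of_nonneg_right hlmin_le (dotProduct_self_nonneg v)
  linarith

end Lmin

section Lam2
variable {m : ℕ} {C : Matrix (Fin m) (Fin m) ℝ}

lemma symm_dot_mulVec (hs : Cᵀ = C) (u w : Fin m → ℝ) :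
    u ⬝ᵥ (C *ᵥ w) = (C *ᵥ u) ⬝ᵥ w := by
  rw [dotProduct_mulVec, ← Matrix.vecMul_transpose, hs]

lemma lam2_facts (hm2 : 2 ≤ m) (hC : C.PosSemidef) (hN : NullSpanOnes C) :
    0 < lam2 C ∧ ∀ v : Fin m → ℝ, (∑ i, v i) = 0 → lam2 C * (v ⬝ᵥ v) ≤ v ⬝ᵥ (C *ᵥ v) := by
  have hm : 0 < m := by omega
  have hH : C.IsHermitian := hC.1
  have hs : Cᵀ = C := by
    have := hH
    rwa [Matrix.IsHermitian, Matrix.conjTranspose_eq_transpose_of_trivial] at this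
  set ones : Fin m → ℝ := (fun _ => 1) with hones_def
  have hones0 : C *ᵥ ones = 0 := (hN ones).mpr ⟨1, rfl⟩
  have ones_ne : ones ≠ 0 := by
    intro h
    have := congrFun h ⟨0, hm⟩
    simp [hones_def] at this
  -- find the index of the zero eigenvalue
  have hex : ∃ i₀, evec hH i₀ ⬝ᵥ ones ≠ 0 := by
    by_contra h
    push_neg at h
    have hexp := evec_expand hH ones
    simp only [h, zero_smul, Finset.sum_const_zero] at hexp
    exact ones_ne hexp
  obtain ⟨i₀, hc₀⟩ := hex
  have hlam0 : hH.eigenvalues i₀ = 0 := by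
    have h1 : evec hH i₀ ⬝ᵥ (C *ᵥ ones) = 0 := by rw [hones0, dotProduct_zero]
    rw [symm_dot_mulVec hs, evec_mulVec, smul_dotProduct, smul_eq_mul] at h1
    exact (mul_eq_zero.mp h1).resolve_right hc₀
  have hu₀null : C *ᵥ evec hH i₀ = 0 := by
    rw [evec_mulVec, hlam0, zero_smul]
  obtain ⟨α, hα⟩ := (hN _).mp hu₀null
  have hαne : α ≠ 0 := by
    intro h
    exact evec_ne_zero hH i₀ (by rw [hα, h]; rfl)
  -- coefficient along i₀ vanishes for mean-zero vectors
  have hcoef0 : ∀ v : Fin m → ℝ, (∑ i, v i) = 0 → evec hH i₀ ⬝ᵥ v = 0 := by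
    intro v hv
    have : evec hH i₀ ⬝ᵥ v = α * ∑ i, v i := by
      rw [hα, dotProduct, Finset.mul_sum]
    rw [this, hv, mul_zero]
  -- all other eigenvalues are positive
  have hpos : ∀ i, i ≠ i₀ → 0 < hH.eigenvalues i := by
    intro i hi
    have hnn : 0 ≤ hH.eigenvalues i := by
      have h2 := hC.dotProduct_mulVec_nonneg (evec hH i)
      rw [star_trivial, evec_mulVec, dotProduct_smul, smul_eq_mul, evec_dot] at h2
      simpa using h2
    rcases lt_or_eq_of_le hnn with h | h
    · exact h
    · exfalso
      have hnull : C *ᵥ evec hH i = 0 := by rw [evec_mulVec, ← h, zero_smul]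
      obtain ⟨β, hβ⟩ := (hN _).mp hnull
      have hβne : β ≠ 0 := by
        intro hb
        exact evec_ne_zero hH i (by rw [hβ, hb]; rfl)
      have horth : evec hH i ⬝ᵥ evec hH i₀ = 0 := by
        rw [evec_dot, if_neg hi]
      rw [hβ, hα, dotProduct] at horth
      simp only [Finset.sum_const, Finset.card_univ, Fintype.card_fin, nsmul_eq_mul] at horth
      rcases mul_eq_zero.mp horth with h' | h'
      · exact absurd (by exact_mod_cast h') (by positivity : (m : ℝ) ≠ 0)
      · exact absurd h' (mul_ne_zero hβne hαne)
  -- the second smallest eigenvalue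
  have hne2 : (Finset.univ.erase i₀).Nonempty := by
    obtain ⟨j, hj⟩ := Fintype.exists_ne_of_one_lt_card (by simp; omega) i₀
    exact ⟨j, Finset.mem_erase.mpr ⟨hj, Finset.mem_univ _⟩⟩
  set μ₂ := (Finset.univ.erase i₀).inf' hne2 hH.eigenvalues with hμ₂def
  obtain ⟨istar, histar, histar_eq⟩ := Finset.exists_mem_eq_inf' hne2 hH.eigenvalues
  have histar_ne : istar ≠ i₀ := (Finset.mem_erase.mp histar).1
  have hμ₂pos : 0 < μ₂ := by
    rw [hμ₂def, histar_eq]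
    exact hpos istar histar_ne
  -- quadratic bound with μ₂
  have hquadμ : ∀ v : Fin m → ℝ, (∑ i, v i) = 0 →
      μ₂ * (v ⬝ᵥ v) ≤ v ⬝ᵥ (C *ᵥ v) := by
    intro v hv
    rw [quad_eq hH v, normsq_eq hH v, Finset.mul_sum]
    apply Finset.sum_le_sum
    intro i _
    by_cases hi : i = i₀
    · subst hi
      rw [hcoef0 v hv]
      simp
    · exact mul_le_mul_of_nonneg_right
        (Finset.inf'_le _ (Finset.mem_erase.mpr ⟨hi, Finset.mem_univ _⟩)) (sq_nonneg _)
  -- the lam2 set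
  set S := {r : ℝ | ∃ v : Fin m → ℝ, v ≠ 0 ∧ (∑ i, v i) = 0 ∧ C *ᵥ v = r • v} with hSdef
  have hlb : ∀ r ∈ S, μ₂ ≤ r := by
    rintro r ⟨v, hv, hv0, hEig⟩
    have h1 := hquadμ v hv0
    rw [hEig, dotProduct_smul, smul_eq_mul] at h1
    have h2 : 0 < v ⬝ᵥ v := dotProduct_self_pos hv
    nlinarith
  have hmem : μ₂ ∈ S := by
    refine ⟨evec hH istar, evec_ne_zero hH istar, ?_, ?_⟩
    · have h1 : evec hH i₀ ⬝ᵥ evec hH istar = 0 := by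
        rw [evec_dot, if_neg (Ne.symm histar_ne)]
      rw [hα, dotProduct, ← Finset.mul_sum] at h1
      exact (mul_eq_zero.mp h1).resolve_left hαne
    · rw [evec_mulVec, hμ₂def, histar_eq]
  have hlam2_eq : lam2 C = μ₂ := by
    apply le_antisymm
    · exact csInf_le ⟨μ₂, hlb⟩ hmem
    · exact le_csInf ⟨μ₂, hmem⟩ hlb
  constructor
  · rw [hlam2_eq]; exact hμ₂pos
  · intro v hv
    rw [hlam2_eq]
    exact hquadμ v hv

end Lam2

section Analytic
variable {d : ℕ}

lemma line_hasDerivAt (w x : Vec d) (t₀ : ℝ) :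
    HasDerivAt (fun t : ℝ => w + t • (x - w)) (x - w) t₀ := by
  have h1 : HasDerivAt (fun t : ℝ => t • (x - w)) ((1 : ℝ) • (x - w)) t₀ :=
    (hasDerivAt_id t₀).smul_const (x - w)
  simpa using h1.const_add w

lemma comp_line_hasDerivAt (f : Vec d → ℝ) (gf : Vec d → Vec d)
    (hf : ∀ y, HasGradientAt f (gf y) y) (w x : Vec d) (t₀ : ℝ) :
    HasDerivAt (fun t : ℝ => f (w + t • (x - w)))
      (inner ℝ (gf (w + t₀ • (x - w))) (x - w) : ℝ) t₀ := by
  have h := ((hf (w + t₀ • (x - w))).hasFDerivAt).comp_hasDerivAt t₀ (line_hasDerivAt w x t₀)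
  simp [InnerProductSpace.toDual_apply_apply] at h; exact h

/-- gradient inequality for a convex function -/
lemma convex_gradient_ineq (f : Vec d → ℝ) (hf : ConvexOn ℝ Set.univ f)
    {g w : Vec d} (hg : HasGradientAt f g w) (x : Vec d) :
    f w + inner ℝ g (x - w) ≤ f x := by
  set c : ℝ → Vec d := fun t => w + t • (x - w) with hc
  have hc0 : c 0 = w := by simp [hc]
  have hφ : HasDerivAt (fun t => f (c t)) (inner ℝ g (x - w) : ℝ) 0 := by
    have h := (hc0 ▸ hg.hasFDerivAt).comp_hasDerivAt 0 (line_hasDerivAt w x 0)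
    simp [InnerProductSpace.toDual_apply_apply, hc] at h; exact h
  have hslope : ∀ t : ℝ, t ∈ Set.Ioc (0:ℝ) 1 → (f (c t) - f (c 0)) / t ≤ f x - f w := by
    rintro t ⟨ht0, ht1⟩
    have hcvx := hf.2 (Set.mem_univ w) (Set.mem_univ x) (by linarith : (0:ℝ) ≤ 1 - t)
      (le_of_lt ht0) (by ring)
    have hct : c t = (1 - t) • w + t • x := by rw [hc]; simp only; module
    rw [div_le_iff₀ ht0]
    have h5 : f (c t) ≤ (1 - t) * f w + t * f x := by rw [hct]; simpa using hcvx
    rw [hc0]; nlinarith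
  have htend : Filter.Tendsto (fun t => (f (c t) - f (c 0)) / t)
      (nhdsWithin 0 (Set.Ioi (0:ℝ))) (nhds (inner ℝ g (x - w) : ℝ)) := by
    have h2 := hasDerivAt_iff_tendsto_slope.mp hφ
    have h3 := h2.mono_left (nhdsWithin_mono 0 (fun t (ht : t ∈ Set.Ioi (0:ℝ)) =>
      (by simp only [Set.mem_compl_iff, Set.mem_singleton_iff]; exact ne_of_gt ht :
        t ∈ ({0}ᶜ : Set ℝ))))
    apply Filter.Tendsto.congr _ h3
    intro t
    rw [slope_def_field, sub_zero]
  have hfin : (inner ℝ g (x - w) : ℝ) ≤ f x - f w := by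
    apply le_of_tendsto htend
    filter_upwards [Ioc_mem_nhdsGT_of_mem (Set.mem_Ico.mpr ⟨le_refl (0:ℝ), zero_lt_one⟩)] with t ht
    exact hslope t ht
  linarith

end Analytic

section Descent
variable {d : ℕ}

lemma gf_continuous {L : ℝ} {gf : Vec d → Vec d} (hL : 0 ≤ L)
    (hlip : ∀ a b, ‖gf a - gf b‖ ≤ L * ‖a - b‖) : Continuous gf := by
  apply (LipschitzWith.of_dist_le_mul (K := Real.toNNReal L) (f := gf) ?_).continuous
  intro a b
  rw [dist_eq_norm, dist_eq_norm]
  calc ‖gf a - gf b‖ ≤ L * ‖a - b‖ := hlip a b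
  _ = (Real.toNNReal L : ℝ) * ‖a - b‖ := by rw [Real.coe_toNNReal L hL]

/-- the descent lemma -/
lemma descent_lemma (f : Vec d → ℝ) (gf : Vec d → Vec d)
    (hf : ∀ y, HasGradientAt f (gf y) y)
    {L : ℝ} (hL : 0 ≤ L) (hlip : ∀ a b, ‖gf a - gf b‖ ≤ L * ‖a - b‖) (x y : Vec d) :
    f y ≤ f x + inner ℝ (gf x) (y - x) + L / 2 * ‖y - x‖ ^ 2 := by
  set φ' : ℝ → ℝ := fun t => inner ℝ (gf (x + t • (y - x))) (y - x) with hφ'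
  have hφ'cont : Continuous φ' := by
    apply Continuous.inner
    · exact (gf_continuous hL hlip).comp (continuous_const.add (continuous_id.smul continuous_const))
    · exact continuous_const
  have hderiv : ∀ t ∈ Set.uIcc (0:ℝ) 1, HasDerivAt (fun s => f (x + s • (y - x))) (φ' t) t :=
    fun t _ => comp_line_hasDerivAt f gf hf x y t
  have key := intervalIntegral.integral_eq_sub_of_hasDerivAt hderiv
    (hφ'cont.intervalIntegrable 0 1)
  have hkey2 : ∫ t in (0:ℝ)..1, φ' t = f y - f x := by
    rw [key]; norm_num
  have hptwise : ∀ t ∈ Set.Icc (0:ℝ) 1,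
      φ' t ≤ (inner ℝ (gf x) (y - x) : ℝ) + L * ‖y - x‖ ^ 2 * t := by
    rintro t ⟨ht0, ht1⟩
    have h1 : φ' t - (inner ℝ (gf x) (y - x) : ℝ) =
        (inner ℝ (gf (x + t • (y - x)) - gf x) (y - x) : ℝ) := by
      rw [hφ', inner_sub_left]
    have h2 : (inner ℝ (gf (x + t • (y - x)) - gf x) (y - x) : ℝ) ≤
        ‖gf (x + t • (y - x)) - gf x‖ * ‖y - x‖ := real_inner_le_norm _ _
    have h3 : ‖gf (x + t • (y - x)) - gf x‖ ≤ L * (t * ‖y - x‖) := by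
      have := hlip (x + t • (y - x)) x
      simpa [norm_smul, abs_of_nonneg ht0] using this
    have h4 : ‖gf (x + t • (y - x)) - gf x‖ * ‖y - x‖ ≤ L * (t * ‖y - x‖) * ‖y - x‖ :=
      mul_le_mul_of_nonneg_right h3 (norm_nonneg _)
    nlinarith [norm_nonneg (y - x)]
  have hmono : ∫ t in (0:ℝ)..1, φ' t ≤
      ∫ t in (0:ℝ)..1, ((inner ℝ (gf x) (y - x) : ℝ) + L * ‖y - x‖ ^ 2 * t) := by
    apply intervalIntegral.integral_mono_on zero_le_one
      (hφ'cont.intervalIntegrable 0 1)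
      ((continuous_const.add (continuous_const.mul continuous_id)).intervalIntegrable 0 1)
    exact hptwise
  have hrhs : ∫ t in (0:ℝ)..1, ((inner ℝ (gf x) (y - x) : ℝ) + L * ‖y - x‖ ^ 2 * t) =
      (inner ℝ (gf x) (y - x) : ℝ) + L / 2 * ‖y - x‖ ^ 2 := by
    have : (fun t : ℝ => (inner ℝ (gf x) (y - x) : ℝ) + L * ‖y - x‖ ^ 2 * t)
        = fun t : ℝ => (inner ℝ (gf x) (y - x) : ℝ) + (L * ‖y - x‖ ^ 2) * id t := rfl
    rw [this, intervalIntegral.integral_add (g := fun t : ℝ => (L * ‖y - x‖ ^ 2) * id t) (intervalIntegrable_const)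
      ((continuous_const.mul continuous_id).intervalIntegrable 0 1)]
    rw [intervalIntegral.integral_const, intervalIntegral.integral_const_mul]
    simp only [id_eq]
    rw [integral_id]
    norm_num
    ring
  rw [hkey2] at hmono
  rw [hrhs] at hmono
  linarith

end Descent

section Prox
variable {d : ℕ}

lemma prox_subgradient {G : Vec d → ℝ} (hG : ConvexOn ℝ Set.univ G) {γ : ℝ} (hγ : 0 < γ)
    {z p : Vec d} (hp : IsProx G γ z p) (y : Vec d) :
    G p + (1 / γ) * inner ℝ (z - p) (y - p) ≤ G y := by
  set I : ℝ := inner ℝ (p - z) (y - p) with hI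
  set N : ℝ := ‖y - p‖ ^ 2 with hN
  have hNn : 0 ≤ N := by rw [hN]; positivity
  have hstep : ∀ t : ℝ, 0 < t → t ≤ 1 →
      G p + (1 / γ) * (inner ℝ (z - p) (y - p) : ℝ) ≤ G y + t * (N / (2 * γ)) := by
    intro t ht0 ht1
    set yt : Vec d := p + t • (y - p) with hyt
    have hprox := hp yt
    have hcvx : G yt ≤ (1 - t) * G p + t * G y := by
      have h := hG.2 (Set.mem_univ p) (Set.mem_univ y) (by linarith : (0:ℝ) ≤ 1 - t)
        (le_of_lt ht0) (by ring)
      have hyt2 : yt = (1 - t) • p + t • y := by rw [hyt]; module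
      rw [hyt2]; simpa using h
    have hnorm : ‖yt - z‖ ^ 2 = ‖p - z‖ ^ 2 + 2 * t * I + t ^ 2 * N := by
      have h1 : yt - z = (p - z) + t • (y - p) := by rw [hyt]; abel
      rw [h1, norm_add_sq_real, real_inner_smul_right, norm_smul, hI, hN]
      rw [Real.norm_eq_abs, abs_of_nonneg ht0.le, mul_pow]
      ring
    have hIz : (inner ℝ (z - p) (y - p) : ℝ) = -I := by
      rw [hI, ← inner_neg_left]
      congr 1
      abel
    rw [hIz]
    have h2 : G p + ‖p - z‖ ^ 2 / (2 * γ) ≤ G yt + ‖yt - z‖ ^ 2 / (2 * γ) := hprox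
    rw [hnorm] at h2
    have hγ2 : 0 < 2 * γ := by linarith
    have e1 : (‖p - z‖ ^ 2 + 2 * t * I + t ^ 2 * N) / (2 * γ)
        = ‖p - z‖ ^ 2 / (2 * γ) + t * (I / γ) + t * (t * (N / (2 * γ))) := by
      field_simp
    rw [e1] at h2
    have h3 : t * G p ≤ t * (G y + I / γ + t * (N / (2 * γ))) := by nlinarith [h2, hcvx]
    have h4 : G p ≤ G y + I / γ + t * (N / (2 * γ)) := le_of_mul_le_mul_left h3 ht0
    have h5 : (1 / γ) * (-I) = -(I / γ) := by ring
    linarith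
  apply le_of_forall_pos_le_add
  intro ε hε
  set c : ℝ := N / (2 * γ) with hc
  have hcn : 0 ≤ c := by rw [hc]; positivity
  set t : ℝ := min 1 (ε / (c + 1)) with ht
  have ht0 : 0 < t := by
    rw [ht]
    apply lt_min one_pos
    positivity
  have ht1 : t ≤ 1 := min_le_left _ _
  have h5 := hstep t ht0 ht1
  have h6 : t * c ≤ ε := by
    have h7 : t ≤ ε / (c + 1) := min_le_right _ _
    have h8 : t * c ≤ (ε / (c + 1)) * c := mul_le_mul_of_nonneg_right h7 hcn
    have h9 : (ε / (c + 1)) * c ≤ ε := by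
      rw [div_mul_eq_mul_div, div_le_iff₀ (by linarith : (0:ℝ) < c + 1)]
      nlinarith
    linarith
  linarith


section Bridge
variable {m d : ℕ}

lemma inner_toVec_eq (A B : Matrix (Fin m) (Fin d) ℝ) (i : Fin m) :
    (inner ℝ (toVec (A i)) (toVec (B i)) : ℝ) = ∑ j, A i j * B i j := by
  simp [PiLp.inner_apply, RCLike.inner_apply, toVec]
  exact Finset.sum_congr rfl fun _ _ => mul_comm _ _

lemma frInner_rows (A B : Matrix (Fin m) (Fin d) ℝ) :
    frInner A B = ∑ i, (inner ℝ (toVec (A i)) (toVec (B i)) : ℝ) := by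
  rw [frInner_eq_sum]
  exact Finset.sum_congr rfl fun i _ => (inner_toVec_eq A B i).symm

lemma froSq_rows (A : Matrix (Fin m) (Fin d) ℝ) :
    froSq A = ∑ i, ‖toVec (A i)‖ ^ 2 := by
  rw [froSq, frInner_rows]
  congr 1; ext i
  exact real_inner_self_eq_norm_sq _

lemma row_sum_toVec (s : Finset ℕ) (A : ℕ → Matrix (Fin m) (Fin d) ℝ) (i : Fin m) :
    toVec ((∑ k ∈ s, A k) i) = ∑ k ∈ s, toVec (A k i) := by
  classical
  induction s using Finset.induction_on with
  | empty => rfl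
  | insert _ _ h ih => rw [Finset.sum_insert h, Finset.sum_insert h, ← ih]; rfl

end Bridge

section StepLemma
variable {m d : ℕ}

/-- The one-step inequality for the algorithm. -/
lemma step_ineq (L γ : ℝ) (hγ0 : 0 < γ) (hL0 : 0 ≤ L)
    (f : Fin m → Vec d → ℝ) (gf : Fin m → Vec d → Vec d)
    (hgrad : ∀ i, IsGradient (f i) (gf i))
    (hconv : ∀ i, ConvexOn ℝ Set.univ (f i))
    (hsmooth : ∀ i, LSmooth L (gf i))
    (G : Vec d → ℝ) (hG : ConvexOn ℝ Set.univ G)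
    (P : Vec d → Vec d) (hP : ∀ z, IsProx G γ z (P z))
    (C D : Matrix (Fin m) (Fin m) ℝ) (hDsT : Dᵀ = D) (hCsT : Cᵀ = C)
    (hquadD : ∀ A : Matrix (Fin m) (Fin d) ℝ, γ * L * froSq A ≤ mnormSq D A)
    (hkeyQ : ∀ A : Matrix (Fin m) (Fin d) ℝ, (1/2) * mnormSq C A ≤ mnormSq (1 - D) A)
    (W V Z Yk Sk Xb Y : Matrix (Fin m) (Fin d) ℝ)
    (hZ : Z = D * W - γ • (gradMat gf W + Yk))
    (hV : V = rowsMap P Z)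
    (hYk : Yk = (1/γ) • (C * Sk))
    (hDXb : D * Xb = Xb) (hCXb : C * Xb = 0) (hYXb : frInner Xb Y = 0) :
    phiFG f G V Y - phiFG f G Xb Y ≤
      (1/(2*γ)) * (mnormSq D (W - Xb) - mnormSq D (V - Xb))
      - (1/(2*γ)) * (mnormSq C (Sk + V) - mnormSq C Sk) + frInner V Y := by
  have hγne : γ ≠ 0 := ne_of_gt hγ0
  set Gm := gradMat gf W with hGm
  set Ξ := (1/γ) • (Z - V) with hΞ
  -- (ii) prox subgradient inequality, summed over rows
  have hg_row : ∀ i : Fin m, G (toVec (V i)) +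
      (1/γ) * (inner ℝ (toVec (Z i) - toVec (V i)) (toVec (Xb i) - toVec (V i)) : ℝ) ≤
      G (toVec (Xb i)) := by
    intro i
    have hVi : toVec (V i) = P (toVec (Z i)) := by rw [hV]; rfl
    rw [hVi]
    exact prox_subgradient hG hγ0 (hP (toVec (Z i))) (toVec (Xb i))
  have hfrΞ : frInner Ξ (Xb - V) =
      ∑ i, (1/γ) * (inner ℝ (toVec (Z i) - toVec (V i)) (toVec (Xb i) - toVec (V i)) : ℝ) := by
    rw [hΞ, frInner_smul_left, frInner_rows, Finset.mul_sum]
    exact Finset.sum_congr rfl fun i _ => rfl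
  have hgsum : gMat G V + frInner Ξ (Xb - V) ≤ gMat G Xb := by
    rw [gMat, gMat, hfrΞ, ← Finset.sum_add_distrib]
    exact Finset.sum_le_sum fun i _ => hg_row i
  have hΞflip : frInner Ξ (Xb - V) = - frInner Ξ (V - Xb) := by
    rw [frInner_sub_right, frInner_sub_right]; ring
  have hgIneq : gMat G V - gMat G Xb ≤ frInner Ξ (V - Xb) := by
    rw [hΞflip] at hgsum; linarith
  -- (i) f inequalities, summed over rows
  have hfsum1 : fMat f V ≤ fMat f W + frInner Gm (V - W) + L/2 * froSq (V - W) := by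
    rw [fMat, fMat, frInner_rows, froSq_rows, Finset.mul_sum, ← Finset.sum_add_distrib,
      ← Finset.sum_add_distrib]
    apply Finset.sum_le_sum
    intro i _
    exact descent_lemma (f i) (gf i) (hgrad i) hL0 (hsmooth i) (toVec (W i)) (toVec (V i))
  have hfsum2 : fMat f W + frInner Gm (Xb - W) ≤ fMat f Xb := by
    rw [fMat, fMat, frInner_rows, ← Finset.sum_add_distrib]
    apply Finset.sum_le_sum
    intro i _
    exact convex_gradient_ineq (f i) (hconv i) (hgrad i (toVec (W i))) (toVec (Xb i))
  have hfr_split : frInner Gm (V - W) - frInner Gm (Xb - W) = frInner Gm (V - Xb) := by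
    rw [frInner_sub_right, frInner_sub_right, frInner_sub_right]; ring
  have hfIneq : fMat f V - fMat f Xb ≤ frInner Gm (V - Xb) + L/2 * froSq (V - W) := by
    linarith
  -- combine into φ
  have hphi : phiFG f G V Y - phiFG f G Xb Y ≤
      frInner Gm (V - Xb) + frInner Ξ (V - Xb) + L/2 * froSq (V - W) + frInner V Y := by
    rw [phiFG, phiFG, hYXb]
    linarith
  -- the matrix identity for the gradient direction
  have hGmΞ : Gm + Ξ = (1/γ) • (D * W - V) - Yk := by
    rw [hΞ, hZ, hGm]
    ext i j
    simp only [Matrix.add_apply, Matrix.sub_apply, Matrix.smul_apply, smul_eq_mul]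
    field_simp
    ring
  have h4 : frInner Gm (V - Xb) + frInner Ξ (V - Xb) =
      (1/γ) * frInner (D * W - V) (V - Xb) - frInner Yk (V - Xb) := by
    rw [← frInner_add_left, hGmΞ, frInner_sub_left, frInner_smul_left]
  -- three-point identity
  have h1Ds : (1 - D)ᵀ = 1 - D := by rw [Matrix.transpose_sub, Matrix.transpose_one, hDsT]
  have hsplit : D * W - V = D * (W - V) - (1 - D) * V := by
    rw [Matrix.mul_sub, Matrix.sub_mul, Matrix.one_mul]; abel
  have h51 : frInner (D * W - V) (V - Xb) =
      frInner (D * (W - V)) (V - Xb) - frInner ((1 - D) * V) (V - Xb) := by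
    rw [hsplit, frInner_sub_left]
  have h52 : frInner (D * (W - V)) (V - Xb) = frInner (W - V) (D * (V - Xb)) := by
    rw [frInner_comm]
    exact frInner_symm_mul hDsT (V - Xb) (W - V)
  have h53 : mnormSq D (W - Xb) = mnormSq D (W - V) + mnormSq D (V - Xb)
      + 2 * frInner (W - V) (D * (V - Xb)) := by
    rw [show W - Xb = (W - V) + (V - Xb) by abel]
    exact mnormSq_add hDsT _ _
  have h54 : frInner ((1 - D) * V) (V - Xb) = mnormSq (1 - D) V := by
    rw [frInner_sub_right]
    have e1 : frInner ((1 - D) * V) V = mnormSq (1 - D) V := by rw [mnormSq, frInner_comm]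
    have e2 : frInner ((1 - D) * V) Xb = 0 := by
      rw [frInner_comm, frInner_symm_mul h1Ds]
      have h0 : (1 - D) * Xb = 0 := by rw [Matrix.sub_mul, Matrix.one_mul, hDXb, sub_self]
      rw [h0, frInner_zero_right]
    rw [e1, e2, sub_zero]
  have h5 : (1/γ) * frInner (D * W - V) (V - Xb) =
      (1/(2*γ)) * (mnormSq D (W - Xb) - mnormSq D (V - Xb) - mnormSq D (W - V))
      - (1/γ) * mnormSq (1 - D) V := by
    rw [h51, h52, h54]
    field_simp
    linear_combination (-1) * h53
  -- the C-term
  have h6 : frInner Yk (V - Xb) = (1/γ) * frInner Sk (C * V) := by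
    rw [hYk, frInner_smul_left]
    congr 1
    rw [frInner_sub_right]
    have e2 : frInner (C * Sk) Xb = 0 := by
      rw [frInner_comm, frInner_symm_mul hCsT, hCXb, frInner_zero_right]
    have e1 : frInner (C * Sk) V = frInner Sk (C * V) := by
      rw [frInner_comm, frInner_symm_mul hCsT]
    rw [e1, e2, sub_zero]
  have hCtel : mnormSq C (Sk + V) = mnormSq C Sk + mnormSq C V + 2 * frInner Sk (C * V) :=
    mnormSq_add hCsT Sk V
  -- the smoothness bound
  have hVW : froSq (V - W) = froSq (W - V) := by
    rw [show V - W = -(W - V) by abel, froSq_neg]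
  have hD_WV : γ * L * froSq (W - V) ≤ mnormSq D (W - V) := hquadD _
  have hsm : L/2 * froSq (V - W) - (1/(2*γ)) * mnormSq D (W - V) ≤ 0 := by
    rw [hVW]
    have h7 : (1/(2*γ)) * (γ * L * froSq (W - V)) ≤ (1/(2*γ)) * mnormSq D (W - V) :=
      mul_le_mul_of_nonneg_left hD_WV (by positivity)
    have h8 : (1/(2*γ)) * (γ * L * froSq (W - V)) = L/2 * froSq (W - V) := by
      field_simp
    linarith
  -- the key PSD bound
  have hkeyV : (1/2) * mnormSq C V ≤ mnormSq (1 - D) V := hkeyQ V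
  have hkey2 : -(1/γ) * mnormSq (1 - D) V ≤ -(1/(2*γ)) * mnormSq C V := by
    have h7 : (1/γ) * ((1/2) * mnormSq C V) ≤ (1/γ) * mnormSq (1 - D) V :=
      mul_le_mul_of_nonneg_left hkeyV (by positivity)
    have h8 : (1/γ) * ((1/2) * mnormSq C V) = (1/(2*γ)) * mnormSq C V := by
      ring
    linarith
  -- assemble
  have hfr6 : (1/γ) * frInner Sk (C * V) =
      (1/(2*γ)) * (mnormSq C (Sk + V) - mnormSq C Sk) - (1/(2*γ)) * mnormSq C V := by
    rw [hCtel]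
    field_simp
    ring
  linarith [hphi, h4, h5, h6, hsm, hkey2, hfr6]

end StepLemma

set_option maxHeartbeats 1000000 in
/-- basic inequality II, composite case: under Assumption (A8) and
`0 < γ ≤ λ_min(D)/L`, the ergodic averages satisfy
`φ(X̂^t, Y) − φ(X, Y) ≤ (1/(2t))·( ‖X^0 − X‖²_D/γ + (γ/λ₂(C))·‖Y‖² )`. -/
theorem statement_18
    (m d : ℕ) (hm : 0 < m) (hd : 0 < d) (L γ : ℝ) (hL : 0 < L)
    (f : Fin m → Vec d → ℝ) (gf : Fin m → Vec d → Vec d)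
    (hgrad : ∀ i, IsGradient (f i) (gf i))
    (hconv : ∀ i, ConvexOn ℝ Set.univ (f i))
    (hsmooth : ∀ i, LSmooth L (gf i))
    (G : Vec d → ℝ) (hG : ConvexOn ℝ Set.univ G)
    (P : Vec d → Vec d) (hP : ∀ z, IsProx G γ z (P z))
    (C D : Matrix (Fin m) (Fin m) ℝ)
    -- Assumption (A8) (with `B = I`)
    (hDs : D.IsSymm) (hD1 : (∑ i, ∑ j, D i j) = (m : ℝ))
    (hCpsd : C.PosSemidef) (hCnull : NullSpanOnes C)
    (hDpd : D.PosDef) (hkey : ((1 - (1 / 2 : ℝ) • C) - D).PosSemidef)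
    -- the stepsize
    (hγ0 : 0 < γ) (hγ : γ ≤ lmin D / L)
    -- the algorithm
    (X Xu Yu : ℕ → Matrix (Fin m) (Fin d) ℝ)
    (hXu : ∀ k, Xu (k + 1) = D * X k - γ • (gradMat gf (X k) + Yu k))
    (hXk : ∀ k, X (k + 1) = rowsMap P (Xu (k + 1)))
    (hYu : ∀ k, Yu (k + 1) = Yu k + (1 / γ) • (C * X (k + 1)))
    (hYu0 : Yu 0 = 0) :
    ∀ (t : ℕ), 1 ≤ t → ∀ (x : Vec d) (Y : Matrix (Fin m) (Fin d) ℝ),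
      (∀ j, ∑ i, Y i j = 0) →
      phiFG f G ((1 / (t : ℝ)) • ∑ k ∈ Finset.Icc 1 t, X k) Y -
          phiFG f G (oneOuter m x) Y ≤
        (1 / (2 * (t : ℝ))) *
          ((1 / γ) * mnormSq D (X 0 - oneOuter m x) + (γ / lam2 C) * froSq Y) := by
  intro t ht x Y hY
  have hL0 : (0:ℝ) ≤ L := hL.le
  have hγne : γ ≠ 0 := ne_of_gt hγ0
  have htpos : 0 < t := ht
  have htR : (0:ℝ) < (t:ℝ) := by exact_mod_cast htpos
  have htne : (t:ℝ) ≠ 0 := ne_of_gt htR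
  set Xb := oneOuter m x with hXbdef
  -- symmetry facts
  have hDsT : Dᵀ = D := hDs
  have hDH : D.IsHermitian := by
    rw [Matrix.IsHermitian, Matrix.conjTranspose_eq_transpose_of_trivial]; exact hDs
  have hCsT : Cᵀ = C := by
    have h := hCpsd.1
    rwa [Matrix.IsHermitian, Matrix.conjTranspose_eq_transpose_of_trivial] at h
  -- all-ones vector facts
  set ones : Fin m → ℝ := fun _ => 1 with hones
  have hCones : C *ᵥ ones = 0 := (hCnull ones).mpr ⟨1, rfl⟩
  have hDones : D *ᵥ ones = ones := by
    have hq0 : ones ⬝ᵥ (((1 - (1/2:ℝ) • C) - D) *ᵥ ones) = 0 := by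
      rw [Matrix.sub_mulVec, Matrix.sub_mulVec, Matrix.one_mulVec,
        Matrix.smul_mulVec, hCones, smul_zero, sub_zero, dotProduct_sub]
      have h1 : ones ⬝ᵥ ones = (m:ℝ) := by simp [dotProduct, hones]
      have h2 : ones ⬝ᵥ (D *ᵥ ones) = (m:ℝ) := by
        simp only [dotProduct, Matrix.mulVec, hones, one_mul, mul_one]
        rw [← hD1]
      rw [h1, h2, sub_self]
    have hstar : star ones = ones := by funext i; exact star_trivial _
    have hMones : ((1 - (1/2:ℝ) • C) - D) *ᵥ ones = 0 :=
      (hkey.dotProduct_mulVec_zero_iff ones).mp (by rw [hstar]; exact hq0)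
    rw [Matrix.sub_mulVec, Matrix.sub_mulVec, Matrix.one_mulVec,
      Matrix.smul_mulVec, hCones, smul_zero, sub_zero, sub_eq_zero] at hMones
    exact hMones.symm
  have hrowD : ∀ i, ∑ k, D i k = 1 := by
    intro i
    have h := congrFun hDones i
    simpa [Matrix.mulVec, dotProduct, hones] using h
  have hrowC : ∀ i, ∑ k, C i k = 0 := by
    intro i
    have h := congrFun hCones i
    simpa [Matrix.mulVec, dotProduct, hones] using h
  -- matrix facts about Xb
  have hDXb : D * Xb = Xb := by
    ext i j
    rw [Matrix.mul_apply]
    simp only [hXbdef, oneOuter, Matrix.of_apply]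
    rw [← Finset.sum_mul, hrowD i, one_mul]
  have hCXb : C * Xb = 0 := by
    ext i j
    rw [Matrix.mul_apply]
    simp only [hXbdef, oneOuter, Matrix.of_apply, Matrix.zero_apply]
    rw [← Finset.sum_mul, hrowC i, zero_mul]
  have hYXb : frInner Xb Y = 0 := by
    rw [frInner_eq_sum, Finset.sum_comm]
    apply Finset.sum_eq_zero
    intro j _
    simp only [hXbdef, oneOuter, Matrix.of_apply]
    rw [← Finset.mul_sum, hY j, mul_zero]
  -- quadratic bounds
  have hγL : γ * L ≤ lmin D := (le_div_iff₀ hL).mp hγ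
  have hquadD : ∀ A : Matrix (Fin m) (Fin d) ℝ, γ * L * froSq A ≤ mnormSq D A := by
    intro A
    rw [froSq_eq_col, mnormSq, frInner_mul_eq_col, Finset.mul_sum]
    apply Finset.sum_le_sum
    intro j _
    calc γ * L * ((fun i => A i j) ⬝ᵥ (fun i => A i j))
        ≤ lmin D * ((fun i => A i j) ⬝ᵥ (fun i => A i j)) :=
          mul_le_mul_of_nonneg_right hγL (dotProduct_self_nonneg _)
      _ ≤ (fun i => A i j) ⬝ᵥ (D *ᵥ fun i => A i j) := lmin_quad hm hDH _
  have hkeyQ : ∀ A : Matrix (Fin m) (Fin d) ℝ,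
      (1/2 : ℝ) * mnormSq C A ≤ mnormSq (1 - D) A := by
    intro A
    have h0 : 0 ≤ mnormSq ((1 - (1/2:ℝ) • C) - D) A := mnormSq_nonneg hkey A
    have e1 : ((1 - (1/2:ℝ) • C) - D) * A = A - (1/2:ℝ) • (C * A) - D * A := by
      rw [Matrix.sub_mul, Matrix.sub_mul, Matrix.one_mul, Matrix.smul_mul]
    have e2 : (1 - D) * A = A - D * A := by rw [Matrix.sub_mul, Matrix.one_mul]
    have hexp : mnormSq ((1 - (1/2:ℝ) • C) - D) A
        = mnormSq (1 - D) A - (1/2) * mnormSq C A := by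
      rw [mnormSq, mnormSq, mnormSq, e1, e2, frInner_sub_right, frInner_sub_right,
        frInner_sub_right, frInner_smul_right]
      ring
    linarith
  -- the running sums S and the dual variable
  set S : ℕ → Matrix (Fin m) (Fin d) ℝ := fun k => ∑ j ∈ Finset.Icc 1 k, X j with hSdef
  have hS0 : S 0 = 0 := by rw [hSdef]; simp
  have hSsucc : ∀ k, S (k+1) = S k + X (k+1) := by
    intro k
    rw [hSdef]
    exact Finset.sum_Icc_succ_top (by omega) X
  have hYuS : ∀ k, Yu k = (1/γ) • (C * S k) := by
    intro k
    induction k with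
    | zero => rw [hYu0, hS0, Matrix.mul_zero, smul_zero]
    | succ k ih => rw [hYu k, ih, hSsucc k, Matrix.mul_add, smul_add]
  -- per-step inequality
  have hstep : ∀ k, phiFG f G (X (k+1)) Y - phiFG f G Xb Y ≤
      (1/(2*γ)) * (mnormSq D (X k - Xb) - mnormSq D (X (k+1) - Xb))
      - (1/(2*γ)) * (mnormSq C (S (k+1)) - mnormSq C (S k)) + frInner (X (k+1)) Y := by
    intro k
    have h := step_ineq L γ hγ0 hL0 f gf hgrad hconv hsmooth G hG P hP C D hDsT hCsT
      hquadD hkeyQ (X k) (X (k+1)) (Xu (k+1)) (Yu k) (S k) Xb Y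
      (hXu k) (hXk k) (hYuS k) hDXb hCXb hYXb
    rw [hSsucc k]
    exact h
  -- telescoping potential
  set Φ : ℕ → ℝ := fun k =>
    (1/(2*γ)) * mnormSq D (X k - Xb) + (1/(2*γ)) * mnormSq C (S k) with hΦ
  have hstep' : ∀ k, phiFG f G (X (k+1)) Y - phiFG f G Xb Y ≤
      Φ k - Φ (k+1) + frInner (X (k+1)) Y := by
    intro k
    have h := hstep k
    rw [hΦ]
    simp only
    linarith
  -- shift of index
  have hshift : ∀ (u : ℕ → ℝ), ∑ k ∈ Finset.Icc 1 t, u k = ∑ k ∈ Finset.range t, u (k+1) := by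
    intro u
    rw [← Finset.Ico_add_one_right_eq_Icc, Finset.sum_Ico_eq_sum_range]
    try simp only [Nat.add_sub_cancel]
    exact Finset.sum_congr rfl fun k _ => by rw [add_comm]
  have hshiftM : (∑ k ∈ Finset.range t, X (k+1)) = S t := by
    rw [hSdef]
    simp only
    rw [← Finset.Ico_add_one_right_eq_Icc, Finset.sum_Ico_eq_sum_range]
    try simp only [Nat.add_sub_cancel]
    exact Finset.sum_congr rfl fun k _ => by rw [add_comm]
  -- telescoped inequality
  have hsumstep : (∑ k ∈ Finset.Icc 1 t, phiFG f G (X k) Y) - (t:ℝ) * phiFG f G Xb Y ≤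
      Φ 0 - Φ t + frInner (S t) Y := by
    have h1 : ∑ k ∈ Finset.range t, (phiFG f G (X (k+1)) Y - phiFG f G Xb Y) ≤
        ∑ k ∈ Finset.range t, (Φ k - Φ (k+1) + frInner (X (k+1)) Y) :=
      Finset.sum_le_sum fun k _ => hstep' k
    have h2 : ∑ k ∈ Finset.range t, (Φ k - Φ (k+1) + frInner (X (k+1)) Y) =
        (Φ 0 - Φ t) + frInner (S t) Y := by
      rw [Finset.sum_add_distrib, Finset.sum_range_sub' Φ t, ← hshiftM,
        frInner_sum_left]
    have h3 : ∑ k ∈ Finset.range t, (phiFG f G (X (k+1)) Y - phiFG f G Xb Y) =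
        (∑ k ∈ Finset.Icc 1 t, phiFG f G (X k) Y) - (t:ℝ) * phiFG f G Xb Y := by
      rw [Finset.sum_sub_distrib, Finset.sum_const, Finset.card_range,
        hshift (fun k => phiFG f G (X k) Y)]
      simp [nsmul_eq_mul]
    rw [h3, h2] at h1
    linarith
  have hΦ0 : Φ 0 = (1/(2*γ)) * mnormSq D (X 0 - Xb) := by
    rw [hΦ]
    simp only
    rw [hS0]
    have : mnormSq C (0 : Matrix (Fin m) (Fin d) ℝ) = 0 := by
      rw [mnormSq, Matrix.mul_zero, frInner_zero_right]
    rw [this, mul_zero, add_zero]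
  have hΦt : (1/(2*γ)) * mnormSq C (S t) ≤ Φ t := by
    rw [hΦ]
    simp only
    have h := mnormSq_nonneg hDpd.posSemidef (X t - Xb)
    have : 0 ≤ (1/(2*γ)) * mnormSq D (X t - Xb) := by positivity
    linarith
  -- bound on the dual term
  have hF7 : frInner (S t) Y - (1/(2*γ)) * mnormSq C (S t) ≤ (γ / lam2 C) * froSq Y / 2 := by
    rcases le_or_gt 2 m with hm2 | hmlt
    · obtain ⟨hlampos, hquadlam⟩ := lam2_facts hm2 hCpsd hCnull
      have hmR : (0:ℝ) < (m:ℝ) := by exact_mod_cast hm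
      have hcol : ∀ j : Fin d,
          2 * lam2 C * γ * ((fun i => Y i j) ⬝ᵥ (fun i => S t i j))
            - lam2 C * ((fun i => S t i j) ⬝ᵥ (C *ᵥ (fun i => S t i j)))
          ≤ γ^2 * ((fun i => Y i j) ⬝ᵥ (fun i => Y i j)) := by
        intro j
        set y : Fin m → ℝ := fun i => Y i j with hy
        set s : Fin m → ℝ := fun i => S t i j with hs
        have hy0 : ∑ i, y i = 0 := hY j
        set cb : ℝ := (∑ i, s i) / m with hcb
        set w : Fin m → ℝ := fun i => s i - cb with hw
        have hsw : s = w + cb • ones := by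
          funext i
          simp [hw, hones]
        have hw0 : ∑ i, w i = 0 := by
          rw [hw]
          rw [Finset.sum_sub_distrib, Finset.sum_const, Finset.card_univ,
            Fintype.card_fin, nsmul_eq_mul, hcb]
          field_simp
          ring
        have hyones : y ⬝ᵥ ones = 0 := by
          simp only [dotProduct, hones, mul_one]
          exact hy0
        have hys : y ⬝ᵥ s = y ⬝ᵥ w := by
          rw [hsw, dotProduct_add, dotProduct_smul, smul_eq_mul,
            hyones, mul_zero, add_zero]
        have hCs : C *ᵥ s = C *ᵥ w := by
          rw [hsw, Matrix.mulVec_add, Matrix.mulVec_smul, hCones, smul_zero, add_zero]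
        have hsCs : s ⬝ᵥ (C *ᵥ s) = w ⬝ᵥ (C *ᵥ w) := by
          rw [hCs, hsw, add_dotProduct, smul_dotProduct, smul_eq_mul]
          have h0 : ones ⬝ᵥ (C *ᵥ w) = 0 := by
            rw [symm_dot_mulVec hCsT, hCones, zero_dotProduct]
          rw [h0, mul_zero, add_zero]
        have hquad := hquadlam w hw0
        have hE : (γ • y - lam2 C • w) ⬝ᵥ (γ • y - lam2 C • w) =
            γ^2 * (y ⬝ᵥ y) - 2 * γ * lam2 C * (y ⬝ᵥ w) + (lam2 C)^2 * (w ⬝ᵥ w) := by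
          simp only [sub_dotProduct, dotProduct_sub,
            smul_dotProduct, dotProduct_smul, smul_eq_mul,
            dotProduct_comm w y]
          ring
        have hE0 : 0 ≤ (γ • y - lam2 C • w) ⬝ᵥ (γ • y - lam2 C • w) :=
          dotProduct_self_nonneg _
        have hq2 : lam2 C^2 * (w ⬝ᵥ w) ≤ lam2 C * (w ⬝ᵥ (C *ᵥ w)) := by
          have h9 := mul_le_mul_of_nonneg_left hquad hlampos.le
          calc lam2 C^2 * (w ⬝ᵥ w) = lam2 C * (lam2 C * (w ⬝ᵥ w)) := by ring
            _ ≤ lam2 C * (w ⬝ᵥ (C *ᵥ w)) := h9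
        rw [hys, hsCs]
        linarith [hE0, hE, hq2]
      have hsummed : 2 * lam2 C * γ * frInner Y (S t) - lam2 C * mnormSq C (S t) ≤
          γ^2 * froSq Y := by
        rw [frInner_eq_col, mnormSq, frInner_mul_eq_col, froSq_eq_col,
          Finset.mul_sum, Finset.mul_sum, Finset.mul_sum, ← Finset.sum_sub_distrib]
        exact Finset.sum_le_sum fun j _ => hcol j
      have e1 : frInner (S t) Y - (1/(2*γ)) * mnormSq C (S t)
          = (2 * lam2 C * γ * frInner Y (S t) - lam2 C * mnormSq C (S t)) / (2 * lam2 C * γ) := by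
        rw [frInner_comm]
        field_simp
      have e2 : (γ / lam2 C) * froSq Y / 2 = (γ^2 * froSq Y) / (2 * lam2 C * γ) := by
        field_simp
      rw [e1, e2]
      apply div_le_div_of_nonneg_right hsummed ?_
      positivity
    · -- m = 1
      have hm1 : m = 1 := by omega
      subst hm1
      have hY0 : Y = 0 := by
        ext i j
        have h := hY j
        rw [Fin.sum_univ_one] at h
        have hi : i = 0 := Subsingleton.elim i 0
        rw [hi, h, Matrix.zero_apply]
      rw [hY0, frInner_zero_right]
      have h1 : froSq (0 : Matrix (Fin 1) (Fin d) ℝ) = 0 := by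
        rw [froSq, frInner_zero_right]
      rw [h1, mul_zero, zero_div]
      have h2 := mnormSq_nonneg hCpsd (S t)
      have h3 : 0 ≤ (1/(2*γ)) * mnormSq C (S t) := by positivity
      linarith
  -- Jensen's inequality for the ergodic average
  have hgoalS : (∑ k ∈ Finset.Icc 1 t, X k) = S t := rfl
  have hwsum : ∑ _k ∈ Finset.Icc 1 t, (1/(t:ℝ)) = 1 := by
    rw [Finset.sum_const, Nat.card_Icc]
    simp only [Nat.add_sub_cancel, nsmul_eq_mul]
    field_simp
  have hrowhat : ∀ i : Fin m, toVec ((((1:ℝ)/(t:ℝ)) • S t) i)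
      = ∑ k ∈ Finset.Icc 1 t, (1/(t:ℝ)) • toVec (X k i) := by
    intro i
    have h1 : toVec ((((1:ℝ)/(t:ℝ)) • S t) i) = (1/(t:ℝ)) • toVec (S t i) := rfl
    rw [h1, hSdef]
    simp only
    rw [row_sum_toVec, Finset.smul_sum]
  have hJf : fMat f (((1:ℝ)/(t:ℝ)) • S t) ≤
      (1/(t:ℝ)) * ∑ k ∈ Finset.Icc 1 t, fMat f (X k) := by
    rw [fMat, Finset.mul_sum]
    simp only [fMat, Finset.mul_sum]
    rw [Finset.sum_comm]
    apply Finset.sum_le_sum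
    intro i _
    rw [hrowhat i]
    have h := (hconv i).map_sum_le (t := Finset.Icc 1 t) (w := fun _ => 1/(t:ℝ))
      (p := fun k => toVec (X k i)) (fun k _ => by positivity) hwsum
      (fun k _ => Set.mem_univ _)
    simpa [smul_eq_mul] using h
  have hJg : gMat G (((1:ℝ)/(t:ℝ)) • S t) ≤
      (1/(t:ℝ)) * ∑ k ∈ Finset.Icc 1 t, gMat G (X k) := by
    rw [gMat, Finset.mul_sum]
    simp only [gMat, Finset.mul_sum]
    rw [Finset.sum_comm]
    apply Finset.sum_le_sum
    intro i _
    rw [hrowhat i]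
    have h := hG.map_sum_le (t := Finset.Icc 1 t) (w := fun _ => 1/(t:ℝ))
      (p := fun k => toVec (X k i)) (fun k _ => by positivity) hwsum
      (fun k _ => Set.mem_univ _)
    simpa [smul_eq_mul] using h
  have hJinner : frInner (((1:ℝ)/(t:ℝ)) • S t) Y =
      (1/(t:ℝ)) * ∑ k ∈ Finset.Icc 1 t, frInner (X k) Y := by
    rw [frInner_smul_left, hSdef]
    simp only
    rw [frInner_sum_left]
  have hJ : phiFG f G (((1:ℝ)/(t:ℝ)) • S t) Y ≤
      (1/(t:ℝ)) * ∑ k ∈ Finset.Icc 1 t, phiFG f G (X k) Y := by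
    simp only [phiFG]
    rw [Finset.mul_sum]
    simp only [Finset.mul_sum] at hJf hJg
    rw [hJinner]
    rw [Finset.mul_sum]
    simp only [mul_add]
    rw [Finset.sum_add_distrib, Finset.sum_add_distrib]
    have := hJf
    have := hJg
    linarith [hJf, hJg]
  -- final assembly
  set Sphi : ℝ := ∑ k ∈ Finset.Icc 1 t, phiFG f G (X k) Y with hSphi
  have hmain : Sphi - (t:ℝ) * phiFG f G Xb Y ≤
      (1/(2*γ)) * mnormSq D (X 0 - Xb) + (γ / lam2 C) * froSq Y / 2 := by
    have h := hsumstep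
    rw [hΦ0] at h
    linarith [hΦt, hF7]
  rw [hgoalS]
  have h1 : (1/(t:ℝ)) * (Sphi - (t:ℝ) * phiFG f G Xb Y) =
      (1/(t:ℝ)) * Sphi - phiFG f G Xb Y := by
    field_simp
  have h3 : (1/(t:ℝ)) * (Sphi - (t:ℝ) * phiFG f G Xb Y) ≤
      (1/(t:ℝ)) * ((1/(2*γ)) * mnormSq D (X 0 - Xb) + (γ / lam2 C) * froSq Y / 2) :=
    mul_le_mul_of_nonneg_left hmain (by positivity)
  have h2 : (1/(t:ℝ)) * ((1/(2*γ)) * mnormSq D (X 0 - Xb) + (γ / lam2 C) * froSq Y / 2) =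
      (1/(2*(t:ℝ))) * ((1/γ) * mnormSq D (X 0 - Xb) + (γ / lam2 C) * froSq Y) := by
    field_simp
  linarith [hJ, h1, h2, h3, hSphi]
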